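/- Let F : ℝⁿ → ℝ be a convex differentiable function whose set of minimizers X* = argmin F is nonempty and satisfies X* ≠ ℝⁿ. If F satisfies both hypothesis H1(γ) and hypothesis H2(r) for some γ ≥ 1 and r ≥ 1, then necessarily r ≥ γ. -/

import Mathlib

open Set Filter Topology Metric
open scoped RealInnerProductSpace

/-!
Let `x` be a nearest point of `X*` to some point outside `X*` and `u` the unit vector pointing
towards it, so that `dist (x + t • u, X*) = t` for small `t ≥ 0`. Along this ray `g t = F (x + t • u) - F*`
satisfies `γ g t ≤ t g' t` by H1, so `g t / t ^ γ` is nondecreasing and `g t = O(t ^ γ)` as `t → 0⁺`,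
while H2 gives `K t ^ r ≤ g t`. Both bounds are compatible only if `γ ≤ r`.
-/

theorem exists_infDist_add_smul_eq {E : Type*} [NormedAddCommGroup E] [NormedSpace ℝ E]
    [ProperSpace E] {s : Set E} (hs : IsClosed s) (hne : s.Nonempty) (hs_ne_univ : s ≠ univ) :
    ∃ x ∈ s, ∃ u : E, ‖u‖ = 1 ∧ ∃ δ > 0, ∀ t ∈ Icc 0 δ, infDist (x + t • u) s = t := by
  obtain ⟨y, hy⟩ : ∃ y, y ∉ s := by
    by_contra! h
    exact hs_ne_univ (eq_univ_of_forall h)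
  obtain ⟨x, hx, hxy⟩ := hs.exists_infDist_eq_dist hne y
  set d := dist y x
  have hd : 0 < d := hxy ▸ (hs.notMem_iff_infDist_pos hne).1 hy
  set u := d⁻¹ • (y - x)
  have hu : ‖u‖ = 1 := by
    rw [norm_smul, norm_inv, Real.norm_of_nonneg hd.le, ← dist_eq_norm, inv_mul_cancel₀ hd.ne']
  have hyu : y = x + d • u := by
    rw [smul_inv_smul₀ hd.ne', add_sub_cancel]
  refine ⟨x, hx, u, hu, d, hd, fun t ⟨ht₀, htd⟩ => le_antisymm ?_ ?_⟩
  · calc infDist (x + t • u) s ≤ dist (x + t • u) x := infDist_le_dist_of_mem hx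
      _ = t := by rw [dist_eq_norm, add_sub_cancel_left, norm_smul, hu, mul_one,
        Real.norm_of_nonneg ht₀]
  · -- the nearest point `x` to `y` stays nearest to every point of the segment `[x, y]`
    have hdist : dist y (x + t • u) = d - t := by
      rw [dist_eq_norm, hyu, add_sub_add_left_eq_sub, ← sub_smul, norm_smul, hu, mul_one,
        Real.norm_of_nonneg (sub_nonneg.2 htd)]
    have := infDist_le_infDist_add_dist (s := s) (x := y) (y := x + t • u)
    linarith

theorem monotoneOn_mul_rpow_neg_of_mul_le_mul_deriv {g g' : ℝ → ℝ} {γ η : ℝ}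
    (hg : ∀ t ∈ Ioo 0 η, HasDerivAt g (g' t) t) (hle : ∀ t ∈ Ioo 0 η, γ * g t ≤ t * g' t) :
    MonotoneOn (fun t => g t * t ^ (-γ)) (Ioo 0 η) := by
  have hderiv : ∀ t ∈ Ioo 0 η, HasDerivAt (fun t => g t * t ^ (-γ))
      (g' t * t ^ (-γ) + g t * (-γ * t ^ (-γ - 1))) t := fun t ht =>
    (hg t ht).mul (Real.hasDerivAt_rpow_const (Or.inl ht.1.ne'))
  refine monotoneOn_of_hasDerivWithinAt_nonneg (convex_Ioo 0 η)
    (fun t ht => (hderiv t ht).continuousAt.continuousWithinAt)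
    (fun t ht => (hderiv t (interior_subset ht)).hasDerivWithinAt) fun t ht => ?_
  rw [interior_Ioo] at ht
  have hpow : t ^ (-γ) = t ^ (-γ - 1) * t := by
    rw [← Real.rpow_add_one ht.1.ne', sub_add_cancel]
  have : 0 ≤ t ^ (-γ - 1) * (t * g' t - γ * g t) :=
    mul_nonneg (Real.rpow_pos_of_pos ht.1 _).le (sub_nonneg.2 (hle t ht))
  rw [hpow]
  linarith

theorem exists_eventually_le_mul_rpow_of_mul_le_mul_deriv {g g' : ℝ → ℝ} {γ η : ℝ}
    (hη : 0 < η) (hg : ∀ t ∈ Ioo 0 η, HasDerivAt g (g' t) t)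
    (hle : ∀ t ∈ Ioo 0 η, γ * g t ≤ t * g' t) :
    ∃ C, ∀ᶠ t in 𝓝[>] 0, g t ≤ C * t ^ γ := by
  have hT : η / 2 ∈ Ioo 0 η := ⟨half_pos hη, half_lt_self hη⟩
  refine ⟨g (η / 2) * (η / 2) ^ (-γ), ?_⟩
  filter_upwards [Ioc_mem_nhdsGT hT.1] with t ht
  have ht' : t ∈ Ioo 0 η := ⟨ht.1, ht.2.trans_lt hT.2⟩
  have hmono := monotoneOn_mul_rpow_neg_of_mul_le_mul_deriv hg hle ht' hT ht.2
  calc g t = g t * t ^ (-γ) * t ^ γ := by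
        rw [mul_assoc, ← Real.rpow_add ht.1, neg_add_cancel, Real.rpow_zero, mul_one]
    _ ≤ g (η / 2) * (η / 2) ^ (-γ) * t ^ γ :=
        mul_le_mul_of_nonneg_right hmono (Real.rpow_nonneg ht.1.le γ)

theorem le_of_eventually_mul_rpow_le_mul_rpow {K C γ r : ℝ} (hK : 0 < K)
    (h : ∀ᶠ t in 𝓝[>] 0, K * t ^ r ≤ C * t ^ γ) : γ ≤ r := by
  by_contra! hrγ
  have hlim : Tendsto (fun t : ℝ => C * t ^ (γ - r)) (𝓝[>] 0) (𝓝 0) := by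
    have := ((Real.continuousAt_rpow_const 0 (γ - r) (Or.inr (sub_pos.2 hrγ).le)).const_mul
      C).tendsto.mono_left (nhdsWithin_le_nhds (s := Ioi 0))
    rwa [Real.zero_rpow (sub_pos.2 hrγ).ne', mul_zero] at this
  obtain ⟨t, ht, hlt, ht₀⟩ :=
    (h.and ((hlim.eventually (gt_mem_nhds hK)).and self_mem_nhdsWithin)).exists
  have hpow : t ^ γ = t ^ (γ - r) * t ^ r := by
    rw [← Real.rpow_add ht₀, sub_add_cancel]
  have hr : 0 < t ^ r := Real.rpow_pos_of_pos ht₀ r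
  rw [hpow, ← mul_assoc] at ht
  exact (le_of_mul_le_mul_right ht hr).not_gt hlt

theorem mul_sub_le_mul_fderiv_of_le_inner_gradient {E : Type*} [NormedAddCommGroup E]
    [InnerProductSpace ℝ E] [CompleteSpace E] {F : E → ℝ} {Fstar γ η : ℝ} {x u : E}
    (hγ : 0 < γ) (hu : ‖u‖ = 1)
    (h : ∀ y, ‖y - x‖ < η → F y - Fstar ≤ (1 / γ) * ⟪gradient F y, y - x⟫) :
    ∀ t ∈ Ioo 0 η, γ * (F (x + t • u) - Fstar) ≤ t * fderiv ℝ F (x + t • u) u := by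
  intro t ht
  have hnorm : ‖x + t • u - x‖ = t := by
    rw [add_sub_cancel_left, norm_smul, hu, mul_one, Real.norm_of_nonneg ht.1.le]
  have hxt := h _ (hnorm.trans_lt ht.2)
  rwa [add_sub_cancel_left, inner_smul_right, inner_gradient_left, one_div_mul_eq_div,
    le_div_iff₀' hγ] at hxt

theorem stmt_13_general
    {n : ℕ}
    (F : EuclideanSpace ℝ (Fin n) → ℝ) (Fstar : ℝ)
    (Xstar : Set (EuclideanSpace ℝ (Fin n)))
    (hXstar : Xstar = {z | ∀ y, F z ≤ F y})
    (hne : Xstar.Nonempty)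
    (hFstar : ∀ z ∈ Xstar, F z = Fstar)
    (hdiff : Differentiable ℝ F)
    (hproper : Xstar ≠ Set.univ)
    (γ r : ℝ) (hγ : 1 ≤ γ)
    (hH1 : ∀ z ∈ Xstar, ∃ η > 0, ∀ y : EuclideanSpace ℝ (Fin n),
      ‖y - z‖ < η → F y - Fstar ≤ (1 / γ) * ⟪gradient F y, y - z⟫)
    (hH2 : ∀ z ∈ Xstar, ∃ K > 0, ∃ ε > 0, ∀ y : EuclideanSpace ℝ (Fin n),
      ‖y - z‖ < ε → K * Metric.infDist y Xstar ^ (r : ℝ) ≤ F y - Fstar)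
    :
    γ ≤ r := by
  have hX : Xstar = F ⁻¹' {Fstar} := by
    obtain ⟨x₀, hx₀⟩ := hne
    ext z
    refine ⟨hFstar z, fun hz => hXstar ▸ fun y => ?_⟩
    rw [mem_preimage.1 hz, ← hFstar x₀ hx₀]
    exact (hXstar ▸ hx₀ : x₀ ∈ {z | ∀ y, F z ≤ F y}) y
  obtain ⟨x, hx, u, hu, δ, hδ, hray⟩ :=
    exists_infDist_add_smul_eq (hX ▸ isClosed_singleton.preimage hdiff.continuous) hne hproper
  obtain ⟨η, hη, hH1x⟩ := hH1 x hx
  obtain ⟨K, hK, ε, hε, hH2x⟩ := hH2 x hx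
  have hderiv (t : ℝ) : HasDerivAt (fun t : ℝ => F (x + t • u) - Fstar)
      (fderiv ℝ F (x + t • u) u) t := by
    have hray_deriv : HasDerivAt (fun t : ℝ => x + t • u) u t := by
      simpa using ((hasDerivAt_id t).smul_const u).const_add x
    exact ((hdiff _).hasFDerivAt.comp_hasDerivAt t hray_deriv).sub_const Fstar
  obtain ⟨C, hC⟩ := exists_eventually_le_mul_rpow_of_mul_le_mul_deriv hη (fun t _ => hderiv t)
    (mul_sub_le_mul_fderiv_of_le_inner_gradient (by linarith) hu hH1x)
  refine le_of_eventually_mul_rpow_le_mul_rpow (C := C) hK ?_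
  filter_upwards [hC, Ioo_mem_nhdsGT (lt_min hε hδ)] with t hCt ht
  have hnorm : ‖x + t • u - x‖ < ε := by
    rw [add_sub_cancel_left, norm_smul, hu, mul_one, Real.norm_of_nonneg ht.1.le]
    exact ht.2.trans_le (min_le_left _ _)
  calc K * t ^ r = K * infDist (x + t • u) Xstar ^ r := by
        rw [hray t ⟨ht.1.le, ht.2.le.trans (min_le_right _ _)⟩]
    _ ≤ F (x + t • u) - Fstar := hH2x _ hnorm
    _ ≤ C * t ^ γ := hCt

theorem stmt_13
    {n : ℕ} (hn : 1 ≤ n)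
    (F : EuclideanSpace ℝ (Fin n) → ℝ) (Fstar : ℝ)
    (Xstar : Set (EuclideanSpace ℝ (Fin n)))
    (hXstar : Xstar = {z | ∀ y, F z ≤ F y})
    (hne : Xstar.Nonempty)
    (hFstar : ∀ z ∈ Xstar, F z = Fstar)
    (hconv : ConvexOn ℝ Set.univ F)
    (hdiff : Differentiable ℝ F)
    (hproper : Xstar ≠ Set.univ)
    (γ r : ℝ) (hγ : 1 ≤ γ) (hr : 1 ≤ r)
    (hH1 : ∀ z ∈ Xstar, ∃ η > 0, ∀ y : EuclideanSpace ℝ (Fin n),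
      ‖y - z‖ < η → F y - Fstar ≤ (1 / γ) * ⟪gradient F y, y - z⟫)
    (hH2 : ∀ z ∈ Xstar, ∃ K > 0, ∃ ε > 0, ∀ y : EuclideanSpace ℝ (Fin n),
      ‖y - z‖ < ε → K * Metric.infDist y Xstar ^ (r : ℝ) ≤ F y - Fstar)
    :
    γ ≤ r :=
  stmt_13_general F Fstar Xstar hXstar hne hFstar hdiff hproper γ r hγ hH1 hH2
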